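/- arXiv:2603.03776 — 6 statements merged into one kernel-verified Lean document; each statement's English description precedes it below -/
import Mathlib

section
/- Over a commutative ring of characteristic 2, the determinant of a symmetric matrix with zero diagonal equals the sum, over all fixed-point-free involutions σ of the index set, of the product of entries b_{i,σ(i)}: the contributions of all permutations containing a cycle of length greater than 2 cancel in pairs. -/
/-!
In characteristic 2 signs disappear, so the determinant is the permanent. For a symmetric
matrix the terms of `σ` and `σ⁻¹` coincide, so all permutations other than involutions cancel
in pairs, and the zero diagonal kills every involution with a fixed point.
-/

open Finset

theorem Finset.sum_eq_sum_filter_mul_self_eq_one_of_add_self_eq_zero {G M : Type*} [Group G]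
    [Fintype G] [DecidableEq G] [AddCommMonoid M] (hM : ∀ x : M, x + x = 0) (f : G → M)
    (hf : ∀ g, f g⁻¹ = f g) :
    ∑ g, f g = ∑ g ∈ univ.filter (fun g => g * g = 1), f g := by
  suffices ∑ g ∈ univ.filter (fun g => ¬g * g = 1), f g = 0 by
    rw [← sum_filter_add_sum_filter_not univ (fun g => g * g = 1), this, add_zero]
  refine sum_involution (fun g _ => g⁻¹) (fun g _ => by rw [hf, hM]) (fun g hg _ => ?_)
    (fun g hg => ?_) (fun g _ => inv_inv g)
  · rw [mem_filter] at hg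
    exact fun h => hg.2 (inv_eq_iff_mul_eq_one.mp h)
  · simp only [mem_filter, mem_univ, true_and] at hg ⊢
    rwa [← mul_inv_rev, inv_eq_one]

namespace Matrix

variable {n R : Type*} [Fintype n]

theorem det_eq_permanent_of_two_eq_zero [DecidableEq n] [CommRing R] (h2 : (2 : R) = 0)
    (M : Matrix n n R) : M.det = M.permanent := by
  rw [det_apply, permanent]
  refine sum_congr rfl fun σ _ => ?_
  rcases Int.units_eq_one_or (Equiv.Perm.sign σ) with h | h
  · rw [h, one_smul]
  · rw [h, Units.neg_smul, one_smul, neg_eq_iff_add_eq_zero, ← two_mul, h2, zero_mul]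

theorem permanent_eq_sum_prod_apply_perm [DecidableEq n] [CommSemiring R] (M : Matrix n n R) :
    M.permanent = ∑ σ : Equiv.Perm n, ∏ i, M i (σ i) := by
  rw [← permanent_transpose]
  rfl

theorem IsSymm.prod_apply_perm_inv [CommMonoid R] {M : Matrix n n R} (hM : M.IsSymm)
    (σ : Equiv.Perm n) : ∏ i, M i (σ⁻¹ i) = ∏ i, M i (σ i) := by
  rw [← Equiv.prod_comp σ]
  exact prod_congr rfl fun i _ => by simpa using hM.apply i (σ i)

end Matrix

/-- Over a commutative ring of characteristic 2, the determinant of a symmetric matrix with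
zero diagonal equals the sum over all fixed-point-free involutions `σ` of the products
`∏ i, B i (σ i)`: contributions of permutations containing a cycle of length `> 2` cancel. -/
theorem stmt2 {R : Type*} [CommRing R] (hchar : (2 : R) = 0) (m : ℕ)
    (B : Matrix (Fin m) (Fin m) R) (hsym : B.IsSymm) (hdiag : ∀ i, B i i = 0) :
    B.det = ∑ σ ∈ Finset.univ.filter
        (fun σ : Equiv.Perm (Fin m) => σ * σ = 1 ∧ ∀ i, σ i ≠ i),
      ∏ i, B i (σ i) := by
  have hadd : ∀ x : R, x + x = 0 := fun x => by rw [← two_mul, hchar, zero_mul]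
  rw [B.det_eq_permanent_of_two_eq_zero hchar, B.permanent_eq_sum_prod_apply_perm,
    sum_eq_sum_filter_mul_self_eq_one_of_add_self_eq_zero hadd _ hsym.prod_apply_perm_inv,
    ← filter_filter]
  refine (sum_filter_of_ne fun σ _ hσ i hi => ?_).symm
  exact hσ (prod_eq_zero (mem_univ i) (by rw [hi, hdiag]))
end

section
/- In characteristic 2, for a symmetric zero-diagonal m × m matrix B whose nonzero entries are B_{i,j} = X^{w({i,j})} for edges {i,j} of a graph G with positive integer weights w, the determinant of B (computed in 𝔽₂[X]) equals the sum over all perfect matchings M of G of X raised to twice the weight of M. -/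
/-!
In characteristic 2 the determinant of `B` equals its permanent `∑ σ, ∏ i, B (σ i) i`. As `B`
is symmetric, `σ` and `σ⁻¹` contribute the same term, so all terms cancel in pairs except those of
involutions. An involution contributes only if every `i` is adjacent to `σ i`, i.e. if its
2-cycles form a perfect matching `M`; each edge of `M` then occurs twice in the product, which
gives `X ^ (2 * w(M))`.
-/

open Polynomial Finset
open scoped Classical

noncomputable section

/-- `M` is a perfect matching of `G` given as a set of edges: every element of `M` is an edge
of `G`, and every vertex lies on exactly one edge of `M`. -/
def IsPM {m : ℕ} (G : SimpleGraph (Fin m)) (M : Finset (Sym2 (Fin m))) : Prop :=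
  (∀ e ∈ M, e ∈ G.edgeSet) ∧ ∀ v : Fin m, ∃! e, e ∈ M ∧ v ∈ e

open Equiv Function

namespace Equiv.Perm

theorem involutive_iff_inv_eq_self {V : Type*} {σ : Perm V} : Involutive σ ↔ σ⁻¹ = σ :=
  ⟨Involutive.symm_eq_self_of_involutive σ, fun h i => by
    nth_rewrite 1 [← h]
    exact σ.symm_apply_apply i⟩

variable {V : Type*} [Fintype V] [DecidableEq V]

/-- For a fixed-point-free involution these are its 2-cycles. -/
def edges (σ : Perm V) : Finset (Sym2 V) :=
  univ.image fun i => s(i, σ i)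

theorem mem_edges_of_involutive {σ : Perm V} (hσ : Involutive σ) {a b : V} :
    s(a, b) ∈ σ.edges ↔ σ a = b := by
  simp only [edges, mem_image, mem_univ, true_and, Sym2.eq_iff]
  constructor
  · rintro ⟨i, ⟨rfl, rfl⟩ | ⟨rfl, rfl⟩⟩
    exacts [rfl, hσ i]
  · rintro rfl
    exact ⟨a, .inl ⟨rfl, rfl⟩⟩

theorem eq_of_edges_eq {σ τ : Perm V} (hσ : Involutive σ) (hτ : Involutive τ)
    (h : σ.edges = τ.edges) : σ = τ :=
  ext fun _ => ((mem_edges_of_involutive hτ).1 (h ▸ (mem_edges_of_involutive hσ).2 rfl)).symm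

theorem sum_sym2_eq_two_nsmul_sum_edges {M : Type*} [AddCommMonoid M] {σ : Perm V}
    (hσ : Involutive σ) (hfix : ∀ i, σ i ≠ i) (f : Sym2 V → M) :
    ∑ i, f s(i, σ i) = 2 • ∑ e ∈ σ.edges, f e := by
  rw [Finset.sum_comp, smul_sum]
  refine sum_congr rfl fun e he => ?_
  obtain ⟨a, -, rfl⟩ := mem_image.1 he
  have hfiber : ({i | s(i, σ i) = s(a, σ a)} : Finset V) = {a, σ a} := by
    ext i
    simp only [mem_filter, mem_univ, true_and, mem_insert, mem_singleton, Sym2.eq_iff]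
    constructor
    · rintro (⟨rfl, -⟩ | ⟨rfl, -⟩) <;> simp
    · rintro (rfl | rfl)
      exacts [.inl ⟨rfl, rfl⟩, .inr ⟨rfl, hσ a⟩]
  rw [hfiber, card_pair (hfix a).symm]

end Equiv.Perm

def SimpleGraph.IsMatchingInvolution {V : Type*} (G : SimpleGraph V) (σ : Perm V) : Prop :=
  Involutive σ ∧ ∀ i, G.Adj i (σ i)

namespace Matrix

theorem prod_perm_inv_apply {n R : Type*} [Fintype n] [CommMonoid R] (A : Matrix n n R)
    (σ : Perm n) :
    ∏ i, A (σ⁻¹ i) i = ∏ i, A i (σ i) :=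
  (Equiv.prod_comp σ _).symm.trans (by simp)

variable {n R : Type*} [Fintype n] [DecidableEq n] [CommRing R] [CharP R 2]

theorem det_eq_permanent_of_charTwo (A : Matrix n n R) : A.det = A.permanent := by
  rw [det_apply', permanent]
  refine sum_congr rfl fun σ _ => ?_
  rcases Int.units_eq_one_or (Perm.sign σ) with h | h <;> simp [h, CharTwo.neg_eq]

theorem IsSymm.det_eq_sum_involutive {A : Matrix n n R} (hA : A.IsSymm) :
    A.det = ∑ σ ∈ univ.filter (fun σ : Perm n => Involutive σ), ∏ i, A (σ i) i := by
  rw [det_eq_permanent_of_charTwo, permanent,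
    ← sum_filter_add_sum_filter_not univ (fun σ : Perm n => Involutive σ), add_eq_left]
  refine sum_involution (fun σ _ => σ⁻¹) (fun σ _ => ?_) (fun σ hσ _ => ?_) (fun σ hσ => ?_)
    fun σ _ => inv_inv σ
  · rw [prod_perm_inv_apply, prod_congr rfl fun i _ => hA.apply (σ i) i]
    exact CharTwo.add_self_eq_zero _
  · exact mt Perm.involutive_iff_inv_eq_self.2 (mem_filter.1 hσ).2
  · simpa [Perm.involutive_iff_inv_eq_self, eq_comm] using hσ

theorem IsSymm.det_eq_sum_isMatchingInvolution {A : Matrix n n R} (hA : A.IsSymm)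
    {G : SimpleGraph n} (hG : ∀ i j, ¬G.Adj i j → A i j = 0) :
    A.det = ∑ σ : Perm n with G.IsMatchingInvolution σ, ∏ i, A (σ i) i := by
  rw [hA.det_eq_sum_involutive]
  refine (sum_subset (fun σ hσ => ?_) fun σ hσ hσG => ?_).symm
  · exact mem_filter.2 ⟨mem_univ σ, (mem_filter.1 hσ).2.1⟩
  · obtain ⟨i, hi⟩ := not_forall.1 fun h : ∀ i, G.Adj i (σ i) =>
      hσG (mem_filter.2 ⟨mem_univ σ, (mem_filter.1 hσ).2, h⟩)
    exact prod_eq_zero (mem_univ i) (hG _ _ fun h => hi h.symm)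

end Matrix

section PerfectMatching

variable {m : ℕ} {G : SimpleGraph (Fin m)}

theorem isPM_edges {σ : Perm (Fin m)} (hσ : G.IsMatchingInvolution σ) : IsPM G σ.edges := by
  refine ⟨fun e he => ?_, fun v =>
    ⟨s(v, σ v), ⟨mem_image_of_mem _ (mem_univ v), Sym2.mem_mk_left _ _⟩, ?_⟩⟩
  · obtain ⟨i, -, rfl⟩ := mem_image.1 he
    exact hσ.2 i
  · rintro e ⟨he, hv⟩
    induction e using Sym2.ind with | _ a b => ?_
    rw [Perm.mem_edges_of_involutive hσ.1] at he
    subst he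
    rcases Sym2.mem_iff.1 hv with rfl | rfl
    · rfl
    · rw [hσ.1, Sym2.eq_swap]

theorem IsPM.existsUnique_mem {M : Finset (Sym2 (Fin m))} (hM : IsPM G M) (v : Fin m) :
    ∃! w, s(v, w) ∈ M := by
  obtain ⟨e, ⟨he, hv⟩, huniq⟩ := hM.2 v
  refine ⟨Sym2.Mem.other hv, by beta_reduce; rwa [Sym2.other_spec hv], fun w hw => ?_⟩
  rw [← Sym2.congr_right, Sym2.other_spec hv, huniq _ ⟨hw, Sym2.mem_mk_left v w⟩]

theorem IsPM.exists_edges_eq {M : Finset (Sym2 (Fin m))} (hM : IsPM G M) :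
    ∃ σ : Perm (Fin m), G.IsMatchingInvolution σ ∧ σ.edges = M := by
  choose p hp huniq using hM.existsUnique_mem
  beta_reduce at hp huniq
  have hinv : Involutive p := fun v => (huniq (p v) v (by rw [Sym2.eq_swap]; exact hp v)).symm
  refine ⟨hinv.toPerm p, ⟨hinv.toPerm_involutive, fun v => hM.1 _ (hp v)⟩, ?_⟩
  ext e
  induction e using Sym2.ind with | _ a b => ?_
  rw [Perm.mem_edges_of_involutive hinv.toPerm_involutive, Involutive.coe_toPerm]
  exact ⟨fun h => h ▸ hp a, fun h => (huniq a b h).symm⟩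

theorem sum_isPM_eq_sum_edges {R : Type*} [AddCommMonoid R] (f : Finset (Sym2 (Fin m)) → R) :
    ∑ M : Finset (Sym2 (Fin m)) with IsPM G M, f M =
      ∑ σ : Perm (Fin m) with G.IsMatchingInvolution σ, f σ.edges := by
  refine (sum_bij (fun σ _ => σ.edges) (fun σ hσ => ?_) (fun σ hσ τ hτ h => ?_) (fun M hM => ?_)
    fun _ _ => rfl).symm
  · exact mem_filter.2 ⟨mem_univ _, isPM_edges (mem_filter.1 hσ).2⟩
  · exact Perm.eq_of_edges_eq (mem_filter.1 hσ).2.1 (mem_filter.1 hτ).2.1 h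
  · obtain ⟨σ, hσ, rfl⟩ := (mem_filter.1 hM).2.exists_edges_eq
    exact ⟨σ, mem_filter.2 ⟨mem_univ _, hσ⟩, rfl⟩

end PerfectMatching

/-- For the symmetric zero-diagonal matrix over `𝔽₂[X]` with entries `X^{w({i,j})}` on the
edges of a weighted graph `G`, the determinant equals the sum over all perfect matchings `M`
of `G` of `X^{2·w(M)}`. -/
theorem stmt3 (m : ℕ) (G : SimpleGraph (Fin m)) (w : Sym2 (Fin m) → ℕ) :
    (Matrix.of fun i j =>
        if G.Adj i j then (X : Polynomial (ZMod 2)) ^ (w s(i, j)) else 0).det =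
      ∑ M ∈ Finset.univ.filter (fun M : Finset (Sym2 (Fin m)) => IsPM G M),
        (X : Polynomial (ZMod 2)) ^ (2 * ∑ e ∈ M, w e) := by
  set B : Matrix (Fin m) (Fin m) (ZMod 2)[X] :=
    Matrix.of fun i j => if G.Adj i j then X ^ w s(i, j) else 0
  have hsymm : B.IsSymm := Matrix.IsSymm.ext fun i j => by simp [B, G.adj_comm, Sym2.eq_swap]
  have hsupp : ∀ i j, ¬G.Adj i j → B i j = 0 := fun i j h => if_neg h
  rw [hsymm.det_eq_sum_isMatchingInvolution hsupp, sum_isPM_eq_sum_edges]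
  refine sum_congr rfl fun σ hσ => ?_
  obtain ⟨hinv, hadj⟩ := (mem_filter.1 hσ).2
  calc ∏ i, B (σ i) i = ∏ i, X ^ w s(i, σ i) :=
        prod_congr rfl fun i _ => by simp [B, G.adj_symm (hadj i), Sym2.eq_swap]
    _ = X ^ (2 * ∑ e ∈ σ.edges, w e) := by
        rw [prod_pow_eq_pow_sum, Perm.sum_sym2_eq_two_nsmul_sum_edges hinv fun i => (hadj i).ne',
          smul_eq_mul]
end
end

section
/- Suppose a finite weighted graph G has a unique minimum-weight perfect matching of weight w*. Then the determinant of the associated 𝔽₂[X]-matrix B (with B_{i,j} = X^{w({i,j})} on edges, 0 otherwise) is nonzero, and the minimal degree of a monomial appearing in det(B) equals 2w*. -/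
open Polynomial Finset
open scoped Classical

noncomputable section

/-!
In characteristic 2 the signs of the Leibniz expansion disappear, and since `B` is symmetric the
terms of `σ` and `σ⁻¹` are equal and cancel, so `det B` is the sum of the terms of the
involutions `σ`. Such a term is nonzero exactly when every `v` is adjacent to `σ v`, i.e. when the
pairs `{v, σ v}` form a perfect matching `M`, and it is then `X ^ (2 * w M)`. Involutions and
perfect matchings correspond bijectively, so the coefficient of `X ^ (2 * w*)` is `1` and all lower
ones vanish.
-/
theorem Equiv.Perm.involutive_iff_inv_eq {α : Type*} (σ : Equiv.Perm α) :
    Function.Involutive σ ↔ σ⁻¹ = σ := by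
  rw [inv_eq_iff_mul_eq_one, Equiv.Perm.ext_iff]
  rfl

theorem Matrix.det_eq_sum_involutive_of_charTwo {n R : Type*} [Fintype n] [DecidableEq n]
    [CommRing R] [CharP R 2] (A : Matrix n n R) (hA : A.IsSymm) :
    A.det = ∑ σ ∈ Finset.univ.filter (fun σ : Equiv.Perm n => Function.Involutive σ),
      ∏ i, A (σ i) i := by
  have hsign (σ : Equiv.Perm n) : ((Equiv.Perm.sign σ : ℤ) : R) = 1 := by
    rcases Int.units_eq_one_or (Equiv.Perm.sign σ) with h | h <;> simp [h, CharTwo.neg_eq]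
  have hprod_inv (σ : Equiv.Perm n) : ∏ i, A (σ⁻¹ i) i = ∏ i, A (σ i) i := by
    rw [← Equiv.prod_comp σ]
    exact Finset.prod_congr rfl fun i _ => by simpa using (hA.apply i (σ i)).symm
  rw [Matrix.det_apply', ← Finset.sum_filter_add_sum_filter_not Finset.univ
    (fun σ : Equiv.Perm n => Function.Involutive σ), add_eq_left.mpr]
  · simp only [hsign, one_mul]
  refine Finset.sum_involution (fun σ _ => σ⁻¹) (fun σ _ => ?_) (fun σ hσ _ => ?_)
    (fun σ hσ => ?_) (fun σ _ => inv_inv σ)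
  · rw [hsign, hsign, one_mul, one_mul, hprod_inv, CharTwo.add_self_eq_zero]
  all_goals simp only [Finset.mem_filter, Finset.mem_univ, true_and,
    Equiv.Perm.involutive_iff_inv_eq, inv_inv] at hσ ⊢
  exacts [hσ, fun h => hσ h.symm]

theorem Polynomial.natTrailingDegree_sum_X_pow {R ι : Type*} [Semiring R] [Nontrivial R]
    {s : Finset ι} {d : ι → ℕ} {i₀ : ι} (hi₀ : i₀ ∈ s) (hmin : ∀ i ∈ s, d i₀ ≤ d i)
    (huniq : ∀ i ∈ s, d i = d i₀ → i = i₀) :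
    ∑ i ∈ s, (X : R[X]) ^ d i ≠ 0 ∧ (∑ i ∈ s, (X : R[X]) ^ d i).natTrailingDegree = d i₀ := by
  have hcoeff : (∑ i ∈ s, (X : R[X]) ^ d i).coeff (d i₀) = 1 := by
    rw [finsetSum_coeff, Finset.sum_eq_single_of_mem i₀ hi₀ fun i hi hne => ?_, coeff_X_pow_self]
    rw [coeff_X_pow, if_neg fun h => hne (huniq i hi h.symm)]
  have hne : ∑ i ∈ s, (X : R[X]) ^ d i ≠ 0 := fun h => by simp [h] at hcoeff
  refine ⟨hne, le_antisymm (natTrailingDegree_le_of_ne_zero (by simp [hcoeff]))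
    (le_natTrailingDegree hne fun n hn => ?_)⟩
  rw [finsetSum_coeff]
  exact Finset.sum_eq_zero fun i hi => by
    rw [coeff_X_pow, if_neg (hn.trans_le (hmin i hi)).ne]

namespace Equiv.Perm

variable {V : Type*} [Fintype V] [DecidableEq V]

def pairEdges (σ : Equiv.Perm V) : Finset (Sym2 V) :=
  Finset.univ.image fun v => s(v, σ v)

theorem mk_mem_pairEdges (σ : Equiv.Perm V) (v : V) : s(v, σ v) ∈ σ.pairEdges :=
  Finset.mem_image_of_mem _ (Finset.mem_univ v)

theorem apply_eq_of_mk_mem_pairEdges {σ : Equiv.Perm V} (hσ : Function.Involutive σ) {u v : V}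
    (h : s(u, v) ∈ σ.pairEdges) : σ u = v := by
  obtain ⟨i, -, hi⟩ := Finset.mem_image.mp h
  rcases Sym2.eq_iff.mp hi with ⟨rfl, rfl⟩ | ⟨rfl, rfl⟩
  exacts [rfl, hσ i]

theorem eq_of_pairEdges_eq {σ τ : Equiv.Perm V} (hτ : Function.Involutive τ)
    (h : σ.pairEdges = τ.pairEdges) : σ = τ :=
  Equiv.ext fun v => (apply_eq_of_mk_mem_pairEdges hτ (h ▸ σ.mk_mem_pairEdges v)).symm

theorem sum_mk_eq_two_nsmul_sum_pairEdges {M : Type*} [AddCommMonoid M] {σ : Equiv.Perm V}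
    (hσ : Function.Involutive σ) (hfree : ∀ v, σ v ≠ v) (f : Sym2 V → M) :
    ∑ v, f s(v, σ v) = 2 • ∑ e ∈ σ.pairEdges, f e := by
  rw [pairEdges, Finset.sum_comp, Finset.smul_sum]
  refine Finset.sum_congr rfl fun e he => ?_
  obtain ⟨v, -, rfl⟩ := Finset.mem_image.mp he
  have hfiber : (Finset.univ.filter fun u => s(u, σ u) = s(v, σ v)) = {v, σ v} := by
    ext u
    simp only [Finset.mem_filter, Finset.mem_univ, true_and, Finset.mem_insert,
      Finset.mem_singleton, Sym2.eq_iff]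
    constructor
    · rintro (⟨rfl, -⟩ | ⟨rfl, -⟩) <;> simp
    · rintro (rfl | rfl)
      exacts [Or.inl ⟨rfl, rfl⟩, Or.inr ⟨rfl, hσ v⟩]
  rw [hfiber, Finset.card_pair (hfree v).symm]

end Equiv.Perm

namespace SimpleGraph

variable {V : Type*} (R : Type*) (G : SimpleGraph V) (w : Sym2 V → ℕ)

def weightMatrix [Semiring R] : Matrix V V R[X] :=
  Matrix.of fun i j => if G.Adj i j then X ^ w s(i, j) else 0

variable {R}

theorem isSymm_weightMatrix [Semiring R] : (G.weightMatrix R w).IsSymm := by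
  ext i j
  simp only [weightMatrix, Matrix.transpose_apply, Matrix.of_apply, G.adj_comm, Sym2.eq_swap]

theorem prod_weightMatrix_apply [Fintype V] [CommSemiring R] (σ : Equiv.Perm V) :
    ∏ v, G.weightMatrix R w (σ v) v =
      if ∀ v, G.Adj v (σ v) then X ^ ∑ v, w s(v, σ v) else 0 := by
  split_ifs with hadj
  · rw [← Finset.prod_pow_eq_pow_sum]
    refine Finset.prod_congr rfl fun v _ => ?_
    simp only [weightMatrix, Matrix.of_apply, if_pos (hadj v).symm, Sym2.eq_swap]
  · obtain ⟨v, hv⟩ := not_forall.mp hadj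
    exact Finset.prod_eq_zero (Finset.mem_univ v) (by simp [weightMatrix, G.adj_comm, hv])

theorem det_weightMatrix [Fintype V] [DecidableEq V] [CommRing R] [CharP R 2] :
    (G.weightMatrix R w).det =
      ∑ σ ∈ Finset.univ.filter
          (fun σ : Equiv.Perm V => Function.Involutive σ ∧ ∀ v, G.Adj v (σ v)),
        X ^ (2 * ∑ e ∈ σ.pairEdges, w e) := by
  rw [Matrix.det_eq_sum_involutive_of_charTwo _ (G.isSymm_weightMatrix w), ← Finset.filter_filter]
  refine (Finset.sum_congr rfl fun σ hσ => ?_).trans (Finset.sum_filter _ _).symm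
  rw [prod_weightMatrix_apply]
  split_ifs with hadj
  · rw [Equiv.Perm.sum_mk_eq_two_nsmul_sum_pairEdges (Finset.mem_filter.mp hσ).2
      fun v => (hadj v).ne', smul_eq_mul]
  · rfl

end SimpleGraph

section PerfectMatching

variable {m : ℕ} {G : SimpleGraph (Fin m)}

theorem isPM_pairEdges {σ : Equiv.Perm (Fin m)} (hσ : Function.Involutive σ)
    (hadj : ∀ v, G.Adj v (σ v)) : IsPM G σ.pairEdges := by
  refine ⟨fun e he => ?_, fun v => ⟨s(v, σ v), ⟨σ.mk_mem_pairEdges v, Sym2.mem_mk_left _ _⟩, ?_⟩⟩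
  · obtain ⟨u, -, rfl⟩ := Finset.mem_image.mp he
    exact hadj u
  · rintro e ⟨he, hv⟩
    induction e using Sym2.inductionOn with | hf a b => ?_
    rcases Sym2.mem_iff.mp hv with rfl | rfl
    · rw [Equiv.Perm.apply_eq_of_mk_mem_pairEdges hσ he]
    · rw [← Equiv.Perm.apply_eq_of_mk_mem_pairEdges hσ he, hσ, Sym2.eq_swap]

theorem IsPM.exists_involutive_pairEdges_eq {M : Finset (Sym2 (Fin m))} (hM : IsPM G M) :
    ∃ σ : Equiv.Perm (Fin m), Function.Involutive σ ∧ (∀ v, G.Adj v (σ v)) ∧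
      σ.pairEdges = M := by
  have hpartner (v : Fin m) : ∃ u, s(v, u) ∈ M := by
    obtain ⟨e, ⟨he, hv⟩, -⟩ := hM.2 v
    exact ⟨Sym2.Mem.other hv, (Sym2.other_spec hv).symm ▸ he⟩
  choose p hp using hpartner
  have hunique (v : Fin m) (e : Sym2 (Fin m)) (he : e ∈ M) (hv : v ∈ e) : e = s(v, p v) :=
    (hM.2 v).unique ⟨he, hv⟩ ⟨hp v, Sym2.mem_mk_left _ _⟩
  have hp_inv : Function.Involutive p := fun v =>
    (Sym2.congr_right.mp (hunique (p v) _ (Sym2.eq_swap ▸ hp v) (Sym2.mem_mk_left _ _))).symm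
  refine ⟨hp_inv.toPerm, hp_inv, fun v => hM.1 _ (hp v), Finset.ext fun e => ⟨?_, fun he => ?_⟩⟩
  · intro he
    obtain ⟨v, -, rfl⟩ := Finset.mem_image.mp he
    exact hp v
  · induction e using Sym2.inductionOn with | hf a b => ?_
    rw [hunique a _ he (Sym2.mem_mk_left _ _)]
    exact Equiv.Perm.mk_mem_pairEdges hp_inv.toPerm a

end PerfectMatching

/-- If `G` has a unique minimum-weight perfect matching `M*` of weight `w*`, then the
determinant of the associated `𝔽₂[X]`-matrix `B` is nonzero and the minimal degree of a
monomial appearing in `det B` equals `2·w*`. -/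
theorem stmt4 (m : ℕ) (G : SimpleGraph (Fin m)) (w : Sym2 (Fin m) → ℕ)
    (Mstar : Finset (Sym2 (Fin m))) (wstar : ℕ)
    (hMstar : IsPM G Mstar) (hwstar : wstar = ∑ e ∈ Mstar, w e)
    (hmin : ∀ M, IsPM G M → wstar ≤ ∑ e ∈ M, w e)
    (huniq : ∀ M, IsPM G M → (∑ e ∈ M, w e) = wstar → M = Mstar) :
    (Matrix.of fun i j =>
        if G.Adj i j then (X : Polynomial (ZMod 2)) ^ (w s(i, j)) else 0).det ≠ 0 ∧
    (Matrix.of fun i j =>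
        if G.Adj i j then (X : Polynomial (ZMod 2)) ^ (w s(i, j)) else 0).det.natTrailingDegree
      = 2 * wstar := by
  obtain ⟨σ₀, hσ₀, hadj₀, rfl⟩ := hMstar.exists_involutive_pairEdges_eq
  subst hwstar
  show (G.weightMatrix (ZMod 2) w).det ≠ 0 ∧ (G.weightMatrix (ZMod 2) w).det.natTrailingDegree = _
  rw [G.det_weightMatrix]
  refine natTrailingDegree_sum_X_pow (by simp [hσ₀, hadj₀]) (fun σ hσ => ?_) (fun σ hσ h => ?_)
  all_goals simp only [Finset.mem_filter, Finset.mem_univ, true_and] at hσ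
  all_goals obtain ⟨hσ, hadj⟩ := hσ
  · exact Nat.mul_le_mul_left 2 (hmin _ (isPM_pairEdges hσ hadj))
  · exact Equiv.Perm.eq_of_pairEdges_eq hσ₀ (huniq _ (isPM_pairEdges hσ hadj) (by omega))
end
end

section
/- Under the amplified perturbation w̃(e) = C̃·w(e) + W(e) with C̃ = (m/2)(W_max − 1) + 1 and 1 ≤ W(e) ≤ W_max, for any perfect matching M' that is not minimum under w and any minimum perfect matching M* under w, the w̃-weight gap satisfies Σ_{e∈M'} w̃(e) − Σ_{e∈M*} w̃(e) ≥ 1. -/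
/-!
Both matchings have `m / 2` edges, so the `W`-parts of their `w̃`-weights differ by at least
`m / 2 - (m / 2) W_max = -(C̃ - 1)`, while the `C̃ w`-parts differ by at least `C̃`, the
`w`-gap being a positive integer.
-/

open Finset

theorem two_mul_card_eq_card_of_existsUnique_mem {V : Type*} [Fintype V] [DecidableEq V]
    {M : Finset (Sym2 V)} (hdiag : ∀ e ∈ M, ¬ e.IsDiag)
    (hcover : ∀ v : V, ∃! e, e ∈ M ∧ v ∈ e) : 2 * #M = Fintype.card V := by
  have hends : ∀ e ∈ M, #(univ.bipartiteAbove (fun e v => v ∈ e) e) = 2 := fun e he => by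
    rw [← Sym2.card_toFinset_of_not_isDiag e (hdiag e he)]
    congr 1; ext v; simp
  have hunique : ∀ v ∈ univ, #(M.bipartiteBelow (fun e v => v ∈ e) v) = 1 := fun v _ => by
    simpa [card_eq_one_iff_existsUnique] using hcover v
  have hdouble := sum_card_bipartiteAbove_eq_sum_card_bipartiteBelow (s := M)
    (t := (univ : Finset V)) (fun e v => v ∈ e)
  rw [sum_congr rfl hends, sum_congr rfl hunique] at hdouble
  simpa [mul_comm] using hdouble

theorem IsPM.card_eq {m : ℕ} {G : SimpleGraph (Fin m)} {M : Finset (Sym2 (Fin m))}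
    (hM : IsPM G M) : #M = m / 2 := by
  have h := two_mul_card_eq_card_of_existsUnique_mem
    (fun e he => G.not_isDiag_of_mem_edgeSet (hM.1 e he)) hM.2
  rw [Fintype.card_fin] at h
  omega

theorem one_le_sum_perturbed_sub_sum_perturbed {α : Type*} {A B : Finset α} {k : ℕ}
    (hA : #A = k) (hB : #B = k) {w : α → ℤ} {W : α → ℕ} {Wmax : ℕ}
    (hWA : ∀ e ∈ A, 1 ≤ W e ∧ W e ≤ Wmax) (hWB : ∀ e ∈ B, 1 ≤ W e)
    (hlt : ∑ e ∈ A, w e < ∑ e ∈ B, w e) :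
    1 ≤ ∑ e ∈ B, (((k : ℤ) * ((Wmax : ℤ) - 1) + 1) * w e + (W e : ℤ))
        - ∑ e ∈ A, (((k : ℤ) * ((Wmax : ℤ) - 1) + 1) * w e + (W e : ℤ)) := by
  set C : ℤ := (k : ℤ) * ((Wmax : ℤ) - 1) + 1
  have hA_low : (k : ℤ) ≤ ∑ e ∈ A, (W e : ℤ) := by
    simpa [hA] using card_nsmul_le_sum A (fun e => (W e : ℤ)) 1 fun e he => by
      exact_mod_cast (hWA e he).1
  have hA_high : ∑ e ∈ A, (W e : ℤ) ≤ k * Wmax := by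
    simpa [hA] using sum_le_card_nsmul A (fun e => (W e : ℤ)) Wmax fun e he => by
      exact_mod_cast (hWA e he).2
  have hB_low : (k : ℤ) ≤ ∑ e ∈ B, (W e : ℤ) := by
    simpa [hB] using card_nsmul_le_sum B (fun e => (W e : ℤ)) 1 fun e he => by
      exact_mod_cast hWB e he
  have hC : 1 ≤ C := by linarith
  have hgap : C ≤ C * (∑ e ∈ B, w e - ∑ e ∈ A, w e) :=
    le_mul_of_one_le_right (by linarith) (by linarith)
  simp only [sum_add_distrib, ← mul_sum]
  linarith

theorem stmt7_general (m : ℕ) (G : SimpleGraph (Fin m))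
    (w : Sym2 (Fin m) → ℤ) (W : Sym2 (Fin m) → ℕ) (Wmax : ℕ)
    (hW : ∀ e ∈ G.edgeSet, 1 ≤ W e ∧ W e ≤ Wmax)
    (Ctilde : ℤ) (hC : Ctilde = (m / 2 : ℕ) * ((Wmax : ℤ) - 1) + 1)
    (Mstar M' : Finset (Sym2 (Fin m))) (hMstar : IsPM G Mstar) (hM' : IsPM G M')
    (hgt : (∑ e ∈ Mstar, w e) < ∑ e ∈ M', w e) :
    1 ≤ (∑ e ∈ M', (Ctilde * w e + (W e : ℤ)))
        - ∑ e ∈ Mstar, (Ctilde * w e + (W e : ℤ)) := by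
  subst hC
  exact one_le_sum_perturbed_sub_sum_perturbed hMstar.card_eq hM'.card_eq
    (fun e he => hW e (hMstar.1 e he)) (fun e he => (hW e (hM'.1 e he)).1) hgt

/-- Under the amplified perturbation `w̃(e) = C̃·w(e) + W(e)` with
`C̃ = (m/2)(W_max − 1) + 1` and `1 ≤ W(e) ≤ W_max`, any non-minimum perfect matching `M'`
has `w̃`-weight at least `1` more than any minimum perfect matching `M*`. -/
theorem stmt7 (m : ℕ) (hm : Even m) (G : SimpleGraph (Fin m))
    (w : Sym2 (Fin m) → ℤ) (W : Sym2 (Fin m) → ℕ) (Wmax : ℕ)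
    (hW : ∀ e ∈ G.edgeSet, 1 ≤ W e ∧ W e ≤ Wmax)
    (Ctilde : ℤ) (hC : Ctilde = (m / 2 : ℕ) * ((Wmax : ℤ) - 1) + 1)
    (Mstar M' : Finset (Sym2 (Fin m))) (hMstar : IsPM G Mstar) (hM' : IsPM G M')
    (hmin : ∀ M, IsPM G M → (∑ e ∈ Mstar, w e) ≤ ∑ e ∈ M, w e)
    (hgt : (∑ e ∈ Mstar, w e) < ∑ e ∈ M', w e) :
    1 ≤ (∑ e ∈ M', (Ctilde * w e + (W e : ℤ)))
        - ∑ e ∈ Mstar, (Ctilde * w e + (W e : ℤ)) :=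
  stmt7_general m G w W Wmax hW Ctilde hC Mstar M' hMstar hM' hgt
end

section
/- (Isolation lemma) Let F be a nonempty family of subsets of a finite set E with |E| = N, and assign to each element e ∈ E an independent uniformly random weight W(e) ∈ {1,…,W_max}. Then the probability that the minimum total weight over F is attained by more than one member of F is at most N / W_max. -/
open Finset
open scoped Classical

/-- The total weight of `S ⊆ E` under the random weight assignment `W : E → Fin Wmax`,
where the weight of `e` is `(W e : ℕ) + 1 ∈ {1, …, Wmax}`. -/
def totalWt {E : Type*} {Wmax : ℕ} (W : E → Fin Wmax) (S : Finset E) : ℕ :=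
  ∑ e ∈ S, ((W e : ℕ) + 1)

/-!
An element `e` is ambiguous for the weights `w` if one minimum-weight member of `F` contains it
and another misses it; two distinct minimizers always produce one. Ambiguity of `e` pins down
`w e` from the other weights: it forces `w e` to be the minimum weight of the members missing `e`
minus the minimum of `∑ x ∈ U.erase e, w x` over the members `U` containing `e`. Hence for each
choice of the weights off `e` at most one value of `w e` makes `e` ambiguous, and a union bound
over `e` gives `|E| / |range of weights|`.
-/

section

variable {E M : Type*} [AddCommMonoid M] [PartialOrder M]

def IsMinimizer (F : Finset (Finset E)) (w : E → M) (S : Finset E) : Prop :=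
  S ∈ F ∧ ∀ U ∈ F, ∑ x ∈ S, w x ≤ ∑ x ∈ U, w x

def IsAmbiguous (F : Finset (Finset E)) (w : E → M) (e : E) : Prop :=
  (∃ S, IsMinimizer F w S ∧ e ∈ S) ∧ ∃ T, IsMinimizer F w T ∧ e ∉ T

theorem exists_isAmbiguous_of_ne {F : Finset (Finset E)} {w : E → M} {S T : Finset E}
    (hS : IsMinimizer F w S) (hT : IsMinimizer F w T) (hST : S ≠ T) :
    ∃ e, IsAmbiguous F w e := by
  by_cases hsub : S ⊆ T
  · obtain ⟨e, heT, heS⟩ := exists_of_ssubset (Finset.ssubset_iff_subset_ne.2 ⟨hsub, hST⟩)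
    exact ⟨e, ⟨T, hT, heT⟩, S, hS, heS⟩
  · obtain ⟨e, heS, heT⟩ := not_subset.1 hsub
    exact ⟨e, ⟨S, hS, heS⟩, T, hT, heT⟩

theorem IsAmbiguous.apply_eq_of_eqOn [IsOrderedCancelAddMonoid M] {F : Finset (Finset E)} {w w' : E → M} {e : E}
    (hw : IsAmbiguous F w e) (hw' : IsAmbiguous F w' e) (hoff : Set.EqOn w w' {e}ᶜ) :
    w e = w' e := by
  obtain ⟨⟨S, ⟨hSF, hS⟩, heS⟩, T, ⟨hTF, hT⟩, heT⟩ := hw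
  obtain ⟨⟨S', ⟨hS'F, hS'⟩, heS'⟩, T', ⟨hT'F, hT'⟩, heT'⟩ := hw'
  have erase_eq (U : Finset E) : ∑ x ∈ U.erase e, w x = ∑ x ∈ U.erase e, w' x :=
    sum_congr rfl fun x hx => hoff (ne_of_mem_erase hx)
  have miss_eq {U : Finset E} (heU : e ∉ U) : ∑ x ∈ U, w x = ∑ x ∈ U, w' x := by
    rw [← erase_eq_of_notMem heU, erase_eq]
  have hmin : ∑ x ∈ S, w x = ∑ x ∈ S', w' x := le_antisymm
    (calc ∑ x ∈ S, w x ≤ ∑ x ∈ T', w x := hS T' hT'F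
      _ = ∑ x ∈ T', w' x := miss_eq heT'
      _ ≤ ∑ x ∈ S', w' x := hT' S' hS'F)
    (calc ∑ x ∈ S', w' x ≤ ∑ x ∈ T, w' x := hS' T hTF
      _ = ∑ x ∈ T, w x := (miss_eq heT).symm
      _ ≤ ∑ x ∈ S, w x := hT S hSF)
  have hSS' := hS S' hS'F
  have hS'S := hS' S hSF
  rw [← add_sum_erase S w heS, ← add_sum_erase S' w heS'] at hSS'
  rw [← add_sum_erase S w' heS, ← add_sum_erase S' w' heS'] at hS'S
  rw [← add_sum_erase S w heS, ← add_sum_erase S' w' heS', ← erase_eq S'] at hmin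
  have hrest : ∑ x ∈ S.erase e, w x = ∑ x ∈ S'.erase e, w x := le_antisymm
    (le_of_add_le_add_left hSS') (by rw [erase_eq, erase_eq]; exact le_of_add_le_add_left hS'S)
  rw [hrest] at hmin
  exact add_right_cancel hmin

theorem card_mul_card_le_of_eqOn_compl {α : Type*} [Fintype E] [DecidableEq E] [Fintype α]
    (A : Finset (E → α)) (e : E)
    (hA : ∀ W ∈ A, ∀ W' ∈ A, Set.EqOn W W' {e}ᶜ → W e = W' e) :
    #A * Fintype.card α ≤ Fintype.card (E → α) := by
  rw [← card_univ (α := α), ← card_product, ← card_univ (α := E → α)]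
  refine card_le_card_of_injOn (fun p => Function.update p.1 e p.2) (fun _ _ => mem_univ _) ?_
  rintro ⟨W, a⟩ hW ⟨W', a'⟩ hW' h
  simp only [coe_product, Set.mem_prod, mem_coe] at hW hW'
  have hoff : Set.EqOn W W' {e}ᶜ := fun x hx => by
    simpa [Function.update_of_ne hx] using congrFun h x
  refine Prod.ext (funext fun x => ?_) (by simpa using congrFun h e)
  by_cases hx : x = e
  · exact hx ▸ hA W hW.1 W' hW'.1 hoff
  · exact hoff hx

theorem card_filter_two_minimizers_mul_le [IsOrderedCancelAddMonoid M] {α : Type*} [Fintype E] [DecidableEq E] [Fintype α]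
    (φ : α → M) (hφ : Function.Injective φ) (F : Finset (Finset E)) :
    #{W : E → α | ∃ S T, S ≠ T ∧ IsMinimizer F (φ ∘ W) S ∧ IsMinimizer F (φ ∘ W) T}
      * Fintype.card α ≤ Fintype.card E * Fintype.card (E → α) := by
  calc _ ≤ #(univ.biUnion fun e => {W : E → α | IsAmbiguous F (φ ∘ W) e}) * Fintype.card α := by
        refine Nat.mul_le_mul_right _ (card_le_card fun W hW => ?_)
        obtain ⟨S, T, hST, hS, hT⟩ := (mem_filter.1 hW).2
        obtain ⟨e, he⟩ := exists_isAmbiguous_of_ne hS hT hST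
        exact mem_biUnion.2 ⟨e, mem_univ e, mem_filter.2 ⟨mem_univ W, he⟩⟩
    _ ≤ ∑ e, #{W : E → α | IsAmbiguous F (φ ∘ W) e} * Fintype.card α := by
        rw [← sum_mul]
        exact Nat.mul_le_mul_right _ card_biUnion_le
    _ ≤ ∑ _e : E, Fintype.card (E → α) := by
        refine sum_le_sum fun e _ => card_mul_card_le_of_eqOn_compl _ e fun W hW W' hW' hoff => ?_
        exact hφ <| (mem_filter.1 hW).2.apply_eq_of_eqOn (mem_filter.1 hW').2
          fun x hx => congrArg φ (hoff hx)
    _ = Fintype.card E * Fintype.card (E → α) := by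
        rw [sum_const, card_univ, smul_eq_mul]

end

theorem stmt8_general {E : Type*} [Fintype E] [DecidableEq E] (N Wmax : ℕ)
    (hN : Fintype.card E = N) (hWmax : 0 < Wmax)
    (F : Finset (Finset E)) :
    ((Finset.univ.filter (fun W : E → Fin Wmax =>
        ∃ S ∈ F, ∃ T ∈ F, S ≠ T ∧
          (∀ U ∈ F, totalWt W S ≤ totalWt W U) ∧
          (∀ U ∈ F, totalWt W T ≤ totalWt W U))).card : ℝ)
      / (Fintype.card (E → Fin Wmax) : ℝ) ≤ (N : ℝ) / (Wmax : ℝ) := by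
  set φ : Fin Wmax → ℕ := fun i => (i : ℕ) + 1
  have hcount := card_filter_two_minimizers_mul_le (E := E) φ
    (fun i j h => Fin.ext (Nat.add_right_cancel h)) F
  rw [Fintype.card_fin, hN] at hcount
  have hbad (W : E → Fin Wmax) : (∃ S ∈ F, ∃ T ∈ F, S ≠ T ∧
      (∀ U ∈ F, totalWt W S ≤ totalWt W U) ∧ (∀ U ∈ F, totalWt W T ≤ totalWt W U)) ↔
      ∃ S T, S ≠ T ∧ IsMinimizer F (φ ∘ W) S ∧ IsMinimizer F (φ ∘ W) T :=
    ⟨fun ⟨S, hS, T, hT, hST, hSmin, hTmin⟩ => ⟨S, T, hST, ⟨hS, hSmin⟩, hT, hTmin⟩,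
      fun ⟨S, T, hST, ⟨hS, hSmin⟩, hT, hTmin⟩ => ⟨S, hS, T, hT, hST, hSmin, hTmin⟩⟩
  have hcard : 0 < Fintype.card (E → Fin Wmax) := Fintype.card_pos_iff.2 ⟨fun _ => ⟨0, hWmax⟩⟩
  rw [filter_congr fun W _ => hbad W, div_le_div_iff₀ (by exact_mod_cast hcard) (by positivity)]
  exact_mod_cast hcount

/-- Isolation lemma: for a nonempty family `F` of subsets of a finite set `E` of size `N`,
with independent uniform weights in `{1, …, Wmax}`, the probability that the minimum total
weight is attained by more than one member of `F` is at most `N / Wmax`. -/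
theorem stmt8 {E : Type*} [Fintype E] [DecidableEq E] (N Wmax : ℕ)
    (hN : Fintype.card E = N) (hWmax : 0 < Wmax)
    (F : Finset (Finset E)) (hF : F.Nonempty) :
    ((Finset.univ.filter (fun W : E → Fin Wmax =>
        ∃ S ∈ F, ∃ T ∈ F, S ≠ T ∧
          (∀ U ∈ F, totalWt W S ≤ totalWt W U) ∧
          (∀ U ∈ F, totalWt W T ≤ totalWt W U))).card : ℝ)
      / (Fintype.card (E → Fin Wmax) : ℝ) ≤ (N : ℝ) / (Wmax : ℝ) :=
  stmt8_general N Wmax hN hWmax F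
end

section
/- For a symmetric zero-diagonal matrix over a commutative ring of characteristic 2, the contribution to the determinant of the set of permutations containing at least one cycle of length greater than 2 vanishes: the involution that reverses a distinguished longest cycle pairs each such permutation with a distinct permutation yielding the same product of matrix entries, and paired contributions cancel since 1 + 1 = 0. -/
/-!
Reversing all cycles at once, σ ↦ σ⁻¹, is an involution without fixed points on the
permutations with σ² ≠ 1, and by symmetry of `B` it preserves the entry product; so the
terms cancel in pairs because 2 = 0.
-/

open Finset

theorem Matrix.IsSymm.prod_apply_perm_inv_s10 {n R : Type*} [Fintype n] [CommMonoid R]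
    {B : Matrix n n R} (hB : B.IsSymm) (σ : Equiv.Perm n) :
    ∏ i, B i (σ⁻¹ i) = ∏ i, B i (σ i) := by
  rw [← Equiv.prod_comp σ]
  exact prod_congr rfl fun i _ => by simp [← hB.apply i (σ i)]

theorem Equiv.Perm.sum_filter_mul_self_ne_one_eq_zero {α R : Type*} [Fintype α] [DecidableEq α]
    [NonAssocSemiring R] (hchar : (2 : R) = 0) {f : Equiv.Perm α → R}
    (hf : ∀ σ, f σ⁻¹ = f σ) :
    ∑ σ ∈ univ.filter (fun σ : Equiv.Perm α => σ * σ ≠ 1), f σ = 0 := by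
  refine sum_involution (fun σ _ => σ⁻¹) (fun σ _ => by rw [hf, ← two_mul, hchar, zero_mul])
    (fun σ hσ _ hinv => ?_) (fun σ hσ => ?_) (fun σ _ => inv_inv σ)
  · exact (mem_filter.mp hσ).2 (mul_eq_one_iff_eq_inv.mpr hinv.symm)
  · simpa [← mul_inv_rev] using hσ

theorem stmt10_general {R : Type*} [CommRing R] (hchar : (2 : R) = 0) (m : ℕ)
    (B : Matrix (Fin m) (Fin m) R) (hsym : B.IsSymm) :
    ∑ σ ∈ Finset.univ.filter (fun σ : Equiv.Perm (Fin m) => σ * σ ≠ 1),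
      ∏ i, B i (σ i) = 0 :=
  Equiv.Perm.sum_filter_mul_self_ne_one_eq_zero hchar hsym.prod_apply_perm_inv_s10

/-- For a symmetric zero-diagonal matrix over a commutative ring of characteristic 2, the
total contribution to the determinant of the permutations containing at least one cycle of
length `> 2` (i.e. those with `σ² ≠ 1`) vanishes: reversing a distinguished longest cycle
pairs such permutations into couples with equal entry products, which cancel since `1+1=0`. -/
theorem stmt10 {R : Type*} [CommRing R] (hchar : (2 : R) = 0) (m : ℕ)
    (B : Matrix (Fin m) (Fin m) R) (hsym : B.IsSymm) (hdiag : ∀ i, B i i = 0) :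
    ∑ σ ∈ Finset.univ.filter (fun σ : Equiv.Perm (Fin m) => σ * σ ≠ 1),
      ∏ i, B i (σ i) = 0 :=
  stmt10_general hchar m B hsym
end
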